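/- arXiv:0911.4734 — 6 statements merged into one kernel-verified Lean document; each statement's English description precedes it below -/
import Mathlib

section
/- Let α_1,…,α_g be elements of a commutative ring, let c_l = (−1)^l e_l(α_1,…,α_g) be the signed elementary symmetric functions, let q_{h;i,j} = Σ_{m=0}^h α_i^m α_j^{h-m}, and let p_{h;i,j} = (−1)^h e_h(α_1,…,α̂_i,…,α̂_j,…,α_g) be the signed elementary symmetric function of the g−2 variables obtained by removing α_i and α_j. Then for all 0 ≤ h ≤ g−2 and all i < j: p_{h;i,j} = Σ_{l=0}^{h} c_l · q_{h−l;i,j}. -/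
/-- Complete homogeneous symmetric polynomial of degree `h` in two variables. -/
def qpoly {R : Type*} [CommRing R] (h : ℕ) (x y : R) : R :=
  ∑ m ∈ Finset.range (h + 1), x ^ m * y ^ (h - m)

/-- The `l`-th elementary symmetric function of the values of `α` on the finset `s`. -/
def esymmOn {R : Type*} [CommRing R] {ι : Type*} [DecidableEq ι]
    (s : Finset ι) (l : ℕ) (α : ι → R) : R :=
  ∑ t ∈ s.powersetCard l, ∏ i ∈ t, α i

lemma esymmOn_zero {R : Type*} [CommRing R] {ι : Type*} [DecidableEq ι]
    (s : Finset ι) (α : ι → R) : esymmOn s 0 α = 1 := by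
  simp [esymmOn]

lemma qpoly_symm {R : Type*} [CommRing R] (n : ℕ) (x y : R) :
    qpoly n x y = qpoly n y x := by
  unfold qpoly
  rw [← Finset.sum_range_reflect]
  refine Finset.sum_congr rfl fun k hk => ?_
  have hk' : k ≤ n := Nat.lt_succ_iff.mp (Finset.mem_range.mp hk)
  have e1 : n + 1 - 1 - k = n - k := by omega
  have e2 : n - (n - k) = k := by omega
  rw [e1, e2, mul_comm]

lemma esymmOn_insert {R : Type*} [CommRing R] {ι : Type*} [DecidableEq ι]
    {s : Finset ι} {a : ι} (ha : a ∉ s) (l : ℕ) (α : ι → R) :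
    esymmOn (insert a s) (l + 1) α = esymmOn s (l + 1) α + α a * esymmOn s l α := by
  unfold esymmOn
  rw [Finset.powersetCard_succ_insert ha, Finset.sum_union, Finset.sum_image, Finset.mul_sum]
  · congr 1
    refine Finset.sum_congr rfl fun t ht => ?_
    rw [Finset.prod_insert fun h => ha ((Finset.mem_powersetCard.mp ht).1 h)]
  · intro t ht u hu h
    have hta : a ∉ t := fun h' => ha ((Finset.mem_powersetCard.mp ht).1 h')
    have hua : a ∉ u := fun h' => ha ((Finset.mem_powersetCard.mp hu).1 h')
    have := congrArg (Finset.erase · a) h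
    simpa [Finset.erase_insert hta, Finset.erase_insert hua] using this
  · rw [Finset.disjoint_right]
    intro t ht ht'
    obtain ⟨u, hu, rfl⟩ := Finset.mem_image.mp ht
    exact absurd ((Finset.mem_powersetCard.mp ht').1 (Finset.mem_insert_self a u)) ha

/-- Peel one variable: the signed generating identity. -/
lemma peel {R : Type*} [CommRing R] {ι : Type*} [DecidableEq ι]
    {s : Finset ι} {a : ι} (ha : a ∉ s) (h : ℕ) (α : ι → R) :
    ∑ l ∈ Finset.range (h + 1),
        (-1 : R) ^ l * esymmOn (insert a s) l α * (α a) ^ (h - l)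
      = (-1 : R) ^ h * esymmOn s h α := by
  induction h with
  | zero => simp [esymmOn_zero]
  | succ n ih =>
    rw [Finset.sum_range_succ]
    have key : ∀ l ∈ Finset.range (n + 1),
        (-1 : R) ^ l * esymmOn (insert a s) l α * (α a) ^ (n + 1 - l)
          = α a * ((-1 : R) ^ l * esymmOn (insert a s) l α * (α a) ^ (n - l)) := by
      intro l hl
      have : n + 1 - l = (n - l) + 1 := by
        have := Finset.mem_range.mp hl; omega
      rw [this, pow_succ]; ring
    rw [Finset.sum_congr rfl key, ← Finset.mul_sum, ih, esymmOn_insert ha, Nat.sub_self, pow_zero]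
    ring

/-- with `c_l = (−1)^l e_l(α_1,…,α_g)`,
`q_{h;i,j} = ∑_{m=0}^h α_i^m α_j^{h−m}` and
`p_{h;i,j} = (−1)^h e_h` of the `g−2` variables omitting `α_i, α_j`, one has
`p_{h;i,j} = ∑_{l=0}^h c_l · q_{h−l;i,j}` for all `0 ≤ h ≤ g−2` and `i < j`. -/
theorem signed_esymm_conv {R : Type*} [CommRing R] (g : ℕ) (α : Fin g → R)
    (h : ℕ) (hh : h ≤ g - 2) (i j : Fin g) (hij : i < j) :
    (-1 : R) ^ h * esymmOn ((Finset.univ.erase i).erase j) h α =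
      ∑ l ∈ Finset.range (h + 1),
        ((-1 : R) ^ l * esymmOn Finset.univ l α) * qpoly (h - l) (α i) (α j) := by
  have hne : i ≠ j := hij.ne
  set s' : Finset (Fin g) := (Finset.univ.erase i).erase j with hs'
  have hcomm : (Finset.univ.erase i).erase j = (Finset.univ.erase j).erase i :=
    Finset.erase_right_comm
  have hi' : i ∉ s' := by rw [hs', hcomm]; exact Finset.notMem_erase _ _
  have hins1 : insert i s' = Finset.univ.erase j := by
    rw [hs', hcomm, Finset.insert_erase (Finset.mem_erase.mpr ⟨hne, Finset.mem_univ i⟩)]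
  have hj1 : j ∉ Finset.univ.erase j := Finset.notMem_erase _ _
  have hins2 : insert j (Finset.univ.erase j) = Finset.univ :=
    Finset.insert_erase (Finset.mem_univ j)
  rw [← peel hi' h α, hins1]
  have step : ∀ m ∈ Finset.range (h + 1),
      (-1 : R) ^ m * esymmOn (Finset.univ.erase j) m α * (α i) ^ (h - m)
        = ∑ l ∈ Finset.range (m + 1),
            (-1 : R) ^ l * esymmOn Finset.univ l α * ((α j) ^ (m - l) * (α i) ^ (h - m)) := by
    intro m _
    rw [← peel hj1 m α, hins2, Finset.sum_mul]
    exact Finset.sum_congr rfl fun l _ => by ring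
  rw [Finset.sum_congr rfl step]
  rw [Finset.sum_comm' (s := Finset.range (h+1)) (t := fun m => Finset.range (m+1))
      (t' := Finset.range (h+1)) (s' := fun l => Finset.Icc l h)
      (by intro m l; simp only [Finset.mem_range, Finset.mem_Icc]; omega)]
  refine Finset.sum_congr rfl fun l hl => ?_
  have hlh : l ≤ h := Nat.lt_succ_iff.mp (Finset.mem_range.mp hl)
  rw [← Finset.mul_sum]
  congr 1
  have hIcc : Finset.Icc l h = Finset.Ico l (h + 1) := by
    ext x; simp [Nat.lt_succ_iff]
  rw [hIcc, Finset.sum_Ico_eq_sum_range]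
  have hr : h + 1 - l = (h - l) + 1 := by omega
  rw [hr, qpoly_symm]
  unfold qpoly
  refine Finset.sum_congr rfl fun k hk => ?_
  have hk' : k ≤ h - l := Nat.lt_succ_iff.mp (Finset.mem_range.mp hk)
  have e1 : l + k - l = k := by omega
  have e2 : h - (l + k) = h - l - k := by omega
  rw [e1, e2]
end

section
/- Let α_1,…,α_g be distinct elements of a field, g ≥ 3. The (g−1) × C(g,2) matrix U whose entry in row h (0 ≤ h ≤ g−2) and column (i,j) (1 ≤ i < j ≤ g) is q_{h;i,j} = Σ_{m=0}^h α_i^m α_j^{h−m} has rank g−1; in fact the minor formed by the g−1 columns indexed (1,2),(1,3),…,(1,g) equals the Vandermonde determinant ∏_{2 ≤ i < j ≤ g} (α_j − α_i), up to sign. -/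
lemma qpoly_eq_finsum {K : Type*} [Field K] {n : ℕ} (x y : K) (h : Fin n) :
    qpoly h.1 x y = ∑ k : Fin n, (if k.1 ≤ h.1 then x ^ (h.1 - k.1) else 0) * y ^ k.1 := by
  rw [Fin.sum_univ_eq_sum_range (fun k => (if k ≤ h.1 then x ^ (h.1 - k) else 0) * y ^ k) n]
  rw [← Finset.sum_subset (Finset.range_subset_range.mpr h.2)
    (fun k _ hk => by
      rw [if_neg, zero_mul]
      simpa using fun hkh => hk (Finset.mem_range.mpr (Nat.lt_succ_of_le hkh)))]
  rw [qpoly, ← Finset.sum_range_reflect]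
  refine Finset.sum_congr rfl fun m hm => ?_
  have hm' := Finset.mem_range.mp hm
  rw [if_pos (by omega)]
  congr 1 <;> congr 1 <;> omega

open Matrix in
lemma qpoly_matrix_factor {K : Type*} [Field K] (n : ℕ) (x : K) (y : Fin n → K) :
    (Matrix.of fun (h j : Fin n) => qpoly h.1 x (y j)) =
      (Matrix.of fun (h k : Fin n) => if k.1 ≤ h.1 then x ^ (h.1 - k.1) else 0) *
        (Matrix.vandermonde y)ᵀ := by
  ext h j
  simp only [Matrix.mul_apply, Matrix.of_apply, Matrix.transpose_apply, Matrix.vandermonde_apply]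
  exact qpoly_eq_finsum x (y j) h

lemma qpoly_det_L {K : Type*} [Field K] (n : ℕ) (x : K) :
    (Matrix.of fun (h k : Fin n) => if k.1 ≤ h.1 then x ^ (h.1 - k.1) else 0).det = 1 := by
  rw [Matrix.det_of_lowerTriangular _ (fun i j hij => by
    simp only [Matrix.of_apply]
    rw [if_neg]
    exact fun hc => absurd hc (by simpa using hij))]
  simp

lemma qpoly_det_M {K : Type*} [Field K] (n : ℕ) (x : K) (y : Fin n → K) :
    (Matrix.of fun (h j : Fin n) => qpoly h.1 x (y j)).det =
      ∏ i : Fin n, ∏ j ∈ Finset.Ioi i, (y j - y i) := by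
  rw [qpoly_matrix_factor, Matrix.det_mul, qpoly_det_L, one_mul, Matrix.det_transpose,
    Matrix.det_vandermonde]

/-- for distinct `α_1,…,α_g` in a field (`g ≥ 3`, here indexed `α 0,…,α (g-1)`),
the `(g−1) × C(g,2)` matrix `U` with entries `q_{h;i,j}` (rows `h = 0,…,g−2`, columns the
pairs `i < j`) has rank `g−1`; in fact the minor on the `g−1` columns `(1,2),…,(1,g)`
equals the Vandermonde determinant `∏_{2≤i<j≤g} (α_j − α_i)` up to sign. -/
theorem rank_U_and_minor {K : Type*} [Field K] (g : ℕ) (hg : 3 ≤ g) (α : ℕ → K)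
    (hdist : ∀ i < g, ∀ j < g, α i = α j → i = j) :
    (Matrix.of fun (h : Fin (g - 1)) (p : {p : Fin g × Fin g // p.1 < p.2}) =>
        qpoly h.1 (α p.1.1.1) (α p.1.2.1)).rank = g - 1 ∧
    ∃ ε : K, (ε = 1 ∨ ε = -1) ∧
      (Matrix.of fun (h j : Fin (g - 1)) => qpoly h.1 (α 0) (α (j.1 + 1))).det =
        ε * ∏ i : Fin (g - 1), ∏ j ∈ Finset.Ioi i, (α (j.1 + 1) - α (i.1 + 1)) := by
  classical
  set U : Matrix (Fin (g - 1)) {p : Fin g × Fin g // p.1 < p.2} K :=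
    Matrix.of fun h p => qpoly h.1 (α p.1.1.1) (α p.1.2.1) with hU
  set M : Matrix (Fin (g - 1)) (Fin (g - 1)) K :=
    Matrix.of fun h j => qpoly h.1 (α 0) (α (j.1 + 1)) with hM
  have hdetM : M.det = ∏ i : Fin (g - 1), ∏ j ∈ Finset.Ioi i, (α (j.1 + 1) - α (i.1 + 1)) :=
    qpoly_det_M (g - 1) (α 0) (fun j => α (j.1 + 1))
  have hdet_ne : M.det ≠ 0 := by
    rw [hdetM]
    refine Finset.prod_ne_zero_iff.mpr fun i _ => Finset.prod_ne_zero_iff.mpr fun j hj => ?_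
    refine sub_ne_zero_of_ne fun hc => ?_
    have hij : j.1 + 1 = i.1 + 1 := hdist _ (by omega) _ (by omega) hc
    have := Finset.mem_Ioi.mp hj
    omega
  refine ⟨?_, 1, Or.inl rfl, by rw [hdetM, one_mul]⟩
  apply le_antisymm
  · exact (Matrix.rank_le_card_height _).trans (by simp)
  · set e : Fin (g - 1) → {p : Fin g × Fin g // p.1 < p.2} := (fun j =>
      ⟨(⟨0, by omega⟩, ⟨j.1 + 1, by omega⟩), by simp [Fin.lt_def]⟩) with he
    set P : Matrix {p : Fin g × Fin g // p.1 < p.2} (Fin (g - 1)) K :=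
      fun p j => if p = e j then 1 else 0 with hP
    have key : M = U * P := by
      ext h j
      rw [Matrix.mul_apply]
      simp [hP, hU, hM, he]
    have hMrank : M.rank = g - 1 := by
      rw [Matrix.rank_of_isUnit M ((Matrix.isUnit_iff_isUnit_det M).mpr
        (isUnit_iff_ne_zero.mpr hdet_ne))]
      simp
    calc g - 1 = M.rank := hMrank.symm
      _ = (U * P).rank := by rw [key]
      _ ≤ U.rank := Matrix.rank_mul_le_left U P
end

section
/- Let g ≥ 3 and let α_{k,i} (k = 1,2; i = 1,…,g) be 2g independent indeterminates over ℂ. Form the (2g−3) × C(g,2) matrix Z over the polynomial ring, obtained by stacking the matrix with rows (q_{h}(α_{1,i},α_{1,j}))_{i<j} for h = 0,…,g−2 over the matrix with rows (q_{h}(α_{2,i},α_{2,j}))_{i<j} for h = 1,…,g−2, where q_h(x,y) = Σ_{m=0}^h x^m y^{h−m}. Then Z has rank 2g−3; in particular the minor on the columns indexed (1,2),…,(1,g),(2,3),…,(2,g) is a nonzero polynomial. -/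
open MvPolynomial

/-- The variable `α_{k,i}` (with `k ∈ {1,2}` encoded as `Fin 2` and `i ∈ {1,…,g}`
encoded as `0,…,g−1`), as an indeterminate over `ℂ`. -/
noncomputable def av (k : Fin 2) (i : ℕ) : MvPolynomial (Fin 2 × ℕ) ℂ :=
  MvPolynomial.X (k, i)

/-- The `(2g−3) × C(g,2)` matrix `Z` over the polynomial ring: rows
`(q_h(α_{1,i},α_{1,j}))_{i<j}` for `h = 0,…,g−2` stacked over
`(q_h(α_{2,i},α_{2,j}))_{i<j}` for `h = 1,…,g−2`. -/
noncomputable def Zmat (g : ℕ) :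
    Matrix (Fin (g - 1) ⊕ Fin (g - 2)) {p : Fin g × Fin g // p.1 < p.2}
      (MvPolynomial (Fin 2 × ℕ) ℂ) :=
  Matrix.of fun r p =>
    match r with
    | Sum.inl h => qpoly h.1 (av 0 p.1.1.1) (av 0 p.1.2.1)
    | Sum.inr h => qpoly (h.1 + 1) (av 1 p.1.1.1) (av 1 p.1.2.1)

/-- The square submatrix of `Z` on the columns `(1,2),…,(1,g),(2,3),…,(2,g)`. -/
noncomputable def Nmat (g : ℕ) :
    Matrix (Fin (g - 1) ⊕ Fin (g - 2)) (Fin (g - 1) ⊕ Fin (g - 2))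
      (MvPolynomial (Fin 2 × ℕ) ℂ) :=
  Matrix.of fun r c =>
    match r, c with
    | Sum.inl h, Sum.inl i => qpoly h.1 (av 0 0) (av 0 (i.1 + 1))
    | Sum.inl h, Sum.inr j => qpoly h.1 (av 0 1) (av 0 (j.1 + 2))
    | Sum.inr h, Sum.inl i => qpoly (h.1 + 1) (av 1 0) (av 1 (i.1 + 1))
    | Sum.inr h, Sum.inr j => qpoly (h.1 + 1) (av 1 1) (av 1 (j.1 + 2))

open Matrix

lemma qpoly_mul_sub {R : Type*} [CommRing R] (h : ℕ) (x y : R) :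
    qpoly h x y * (x - y) = x ^ (h+1) - y ^ (h+1) := by
  simpa [qpoly] using geom_sum₂_mul x y (h+1)

lemma qpoly_zero_left {R : Type*} [CommRing R] (h : ℕ) (y : R) :
    qpoly h 0 y = y ^ h := by
  rw [qpoly, Finset.sum_eq_single 0]
  · simp
  · intro m hm hm0; simp [zero_pow hm0]
  · simp

lemma map_qpoly {R S : Type*} [CommRing R] [CommRing S] (f : R →+* S) (h : ℕ) (x y : R) :
    f (qpoly h x y) = qpoly h (f x) (f y) := by
  simp [qpoly, map_sum, _root_.map_mul, map_pow]

noncomputable def evval : Fin 2 × ℕ → ℂ := fun q =>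
  if q.1 = 0 then (if q.2 = 0 then 0 else (q.2 : ℂ))
  else (if q.2 ≤ 1 then 0 else (q.2 : ℂ))

noncomputable def phi : MvPolynomial (Fin 2 × ℕ) ℂ →+* ℂ :=
  (MvPolynomial.aeval evval).toRingHom

lemma phi_av (k : Fin 2) (i : ℕ) : phi (av k i) = evval (k, i) := by
  simp [phi, av]

noncomputable def Amat (g : ℕ) : Matrix (Fin (g-1)) (Fin (g-1)) ℂ :=
  Matrix.of fun h i => ((i.1 : ℂ) + 1) ^ h.1

noncomputable def Bmat0 (g : ℕ) : Matrix (Fin (g-1)) (Fin (g-2)) ℂ :=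
  Matrix.of fun h j => qpoly h.1 1 ((j.1 : ℂ) + 2)

noncomputable def Cmat0 (g : ℕ) : Matrix (Fin (g-2)) (Fin (g-1)) ℂ :=
  Matrix.of fun h i => (if i.1 = 0 then 0 else ((i.1 : ℂ) + 1)) ^ (h.1 + 1)

noncomputable def Dmat0 (g : ℕ) : Matrix (Fin (g-2)) (Fin (g-2)) ℂ :=
  Matrix.of fun h j => ((j.1 : ℂ) + 2) ^ (h.1 + 1)

lemma Nc_eq (g : ℕ) :
    (Nmat g).map phi = Matrix.fromBlocks (Amat g) (Bmat0 g) (Cmat0 g) (Dmat0 g) := by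
  ext r c
  rcases r with h | h <;> rcases c with i | j <;>
    simp only [Nmat, Matrix.map_apply, Matrix.of_apply, Matrix.fromBlocks_apply₁₁,
      Matrix.fromBlocks_apply₁₂, Matrix.fromBlocks_apply₂₁, Matrix.fromBlocks_apply₂₂,
      map_qpoly, phi_av, Amat, Bmat0, Cmat0, Dmat0, evval]
  · simp only [if_true, if_neg (Nat.succ_ne_zero _), qpoly_zero_left]
    push_cast; ring
  · norm_num [qpoly]
  · simp only [show ((1:Fin 2) = 0) = False by simp, if_false, if_pos (by omega : (0:ℕ) ≤ 1),
      qpoly_zero_left]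
    by_cases hi : i.1 = 0
    · simp [hi]
    · rw [if_neg (by omega), if_neg hi]; push_cast; ring
  · simp only [show ((1:Fin 2) = 0) = False by simp, if_false, if_pos le_rfl,
      if_neg (by omega : ¬ (j.1+2) ≤ 1), qpoly_zero_left]
    push_cast; ring

noncomputable def Ebmat (g : ℕ) : Matrix (Fin (g-1)) (Fin (g-2)) ℂ :=
  Matrix.of fun i k =>
    (if i = (⟨0, by have := k.2; omega⟩ : Fin (g-1)) then 1 else 0) +
    (if i = (⟨k.1 + 1, by have := k.2; omega⟩ : Fin (g-1)) then -((k.1 : ℂ) + 2) else 0)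

noncomputable def Emat (g : ℕ) :
    Matrix (Fin (g-1) ⊕ Fin (g-2)) (Fin (g-1) ⊕ Fin (g-2)) ℂ :=
  Matrix.fromBlocks 1 (Ebmat g) 0 (Matrix.diagonal fun k : Fin (g-2) => (k.1 : ℂ) + 1)

noncomputable def Wmat (g : ℕ) : Matrix (Fin (g-2)) (Fin (g-2)) ℂ :=
  Matrix.of fun h k => -(((k.1 : ℂ) + 2) ^ (h.1 + 1))

lemma mul_Eb_add {g : ℕ} {m : Type*} [Fintype m] (M : Matrix m (Fin (g-1)) ℂ)
    (D : Matrix m (Fin (g-2)) ℂ) (h k) :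
    (M * Ebmat g + D * Matrix.diagonal (fun k : Fin (g-2) => (k.1 : ℂ) + 1)) h k =
      M h ⟨0, by have := k.2; omega⟩ +
        M h ⟨k.1 + 1, by have := k.2; omega⟩ * (-((k.1 : ℂ) + 2)) +
        D h k * ((k.1 : ℂ) + 1) := by
  rw [Matrix.add_apply, Matrix.mul_diagonal, Matrix.mul_apply]
  simp only [Ebmat, Matrix.of_apply, mul_add, mul_ite, mul_one, mul_zero,
    Finset.sum_add_distrib, Finset.sum_ite_eq', Finset.mem_univ, if_true]

lemma key_mul (g : ℕ) :
    (Nmat g).map phi * Emat g =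
      Matrix.fromBlocks (Amat g) 0 (Cmat0 g) (Wmat g) := by
  have h12 : Amat g * Ebmat g + Bmat0 g * Matrix.diagonal (fun k : Fin (g-2) => (k.1:ℂ)+1)
      = 0 := by
    ext h k
    rw [mul_Eb_add (g := g) (Amat g) (Bmat0 g) h k]
    simp only [Amat, Bmat0, Matrix.of_apply, Matrix.zero_apply]
    have hq := qpoly_mul_sub h.1 (1 : ℂ) ((k.1 : ℂ) + 2)
    push_cast
    linear_combination -hq
  have h22 : Cmat0 g * Ebmat g + Dmat0 g * Matrix.diagonal (fun k : Fin (g-2) => (k.1:ℂ)+1)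
      = Wmat g := by
    ext h k
    rw [mul_Eb_add (g := g) (Cmat0 g) (Dmat0 g) h k]
    simp only [Cmat0, Dmat0, Wmat, Matrix.of_apply, if_pos rfl,
      if_neg (Nat.succ_ne_zero k.1)]
    push_cast
    ring
  rw [Nc_eq, Emat, Matrix.fromBlocks_multiply, Matrix.mul_one, Matrix.mul_zero, add_zero,
    Matrix.mul_one, Matrix.mul_zero, add_zero, h12, h22]

lemma vdm_ne (n : ℕ) (c : ℕ) :
    (Matrix.vandermonde fun i : Fin n => ((i.1 : ℂ) + (c : ℂ))).det ≠ 0 := by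
  refine Matrix.det_vandermonde_ne_zero_iff.mpr fun i j hij => ?_
  have h2 : (i.1 : ℂ) = (j.1 : ℂ) := add_right_cancel hij
  exact Fin.ext (Nat.cast_injective h2)

lemma det_Nc_ne_zero (g : ℕ) : ((Nmat g).map phi).det ≠ 0 := by
  have hEne : (Emat g).det ≠ 0 := by
    rw [Emat, Matrix.det_fromBlocks_zero₂₁, Matrix.det_one, one_mul, Matrix.det_diagonal]
    refine Finset.prod_ne_zero_iff.mpr fun k _ => ?_
    exact_mod_cast Nat.cast_add_one_ne_zero (R := ℂ) k.1
  have hA : (Amat g).det ≠ 0 := by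
    have hAv : Amat g = (Matrix.vandermonde fun i : Fin (g-1) => ((i.1 : ℂ) + (1:ℕ)))ᵀ := by
      ext h i
      simp [Amat, Matrix.vandermonde, Matrix.transpose_apply]
    rw [hAv, Matrix.det_transpose]
    exact vdm_ne _ _
  have hW : (Wmat g).det ≠ 0 := by
    have hWv : Wmat g = (Matrix.vandermonde fun k : Fin (g-2) => ((k.1 : ℂ) + (2:ℕ)))ᵀ *
        Matrix.diagonal (fun k : Fin (g-2) => -((k.1 : ℂ) + 2)) := by
      ext h k
      rw [Matrix.mul_diagonal, Matrix.transpose_apply]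
      simp only [Wmat, Matrix.vandermonde, Matrix.of_apply]
      push_cast
      ring
    rw [hWv, Matrix.det_mul, Matrix.det_transpose, Matrix.det_diagonal]
    refine mul_ne_zero (vdm_ne _ _) (Finset.prod_ne_zero_iff.mpr fun k _ hc => ?_)
    have h2 : ((k.1 + 2 : ℕ) : ℂ) = 0 := by push_cast; linear_combination neg_eq_zero.mp hc
    exact (Nat.cast_ne_zero (R := ℂ)).mpr (by omega) h2
  have hdet : ((Nmat g).map phi).det * (Emat g).det = (Amat g).det * (Wmat g).det := by
    rw [← Matrix.det_mul, key_mul, Matrix.det_fromBlocks_zero₁₂]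
  intro h0
  rw [h0, zero_mul] at hdet
  exact (mul_ne_zero hA hW) hdet.symm

lemma det_Nmat_ne_zero (g : ℕ) : (Nmat g).det ≠ 0 := by
  intro h0
  apply det_Nc_ne_zero g
  rw [show (Nmat g).map phi = phi.mapMatrix (Nmat g) from rfl, ← RingHom.map_det, h0, map_zero]

def colmap (g : ℕ) : Fin (g-1) ⊕ Fin (g-2) → {p : Fin g × Fin g // p.1 < p.2} :=
  fun c => match c with
  | Sum.inl i => ⟨(⟨0, by have := i.2; omega⟩, ⟨i.1 + 1, by have := i.2; omega⟩),
      Fin.mk_lt_mk.mpr (by omega)⟩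
  | Sum.inr j => ⟨(⟨1, by have := j.2; omega⟩, ⟨j.1 + 2, by have := j.2; omega⟩),
      Fin.mk_lt_mk.mpr (by omega)⟩

noncomputable def Smat (g : ℕ) :
    Matrix {p : Fin g × Fin g // p.1 < p.2} (Fin (g-1) ⊕ Fin (g-2))
      (MvPolynomial (Fin 2 × ℕ) ℂ) :=
  Matrix.of fun p c => if p = colmap g c then 1 else 0

lemma ZS (g : ℕ) : Zmat g * Smat g = Nmat g := by
  ext r c
  rw [Matrix.mul_apply]
  simp only [Smat, Matrix.of_apply, mul_ite, mul_one, mul_zero, Finset.sum_ite_eq',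
    Finset.mem_univ, if_true]
  rcases r with h | h <;> rcases c with i | j <;> rfl

lemma rank_Nmat (g : ℕ) : (Nmat g).rank = Fintype.card (Fin (g-1) ⊕ Fin (g-2)) := by
  have hinj : Function.Injective (Nmat g).mulVecLin := by
    rw [← LinearMap.ker_eq_bot, LinearMap.ker_eq_bot']
    intro v hv
    have hv' : (Nmat g) *ᵥ v = 0 := hv
    have h2 : (Nmat g).det • v = 0 := by
      have h3 : (Nmat g).adjugate *ᵥ ((Nmat g) *ᵥ v) = (Nmat g).adjugate *ᵥ 0 := by rw [hv']
      rw [Matrix.mulVec_mulVec, Matrix.adjugate_mul, Matrix.smul_mulVec,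
        Matrix.one_mulVec, Matrix.mulVec_zero] at h3
      exact h3
    funext i
    have h4 : (Nmat g).det * v i = 0 := by
      have := congrFun h2 i
      simpa [smul_eq_mul] using this
    rcases mul_eq_zero.mp h4 with h5 | h5
    · exact absurd h5 (det_Nmat_ne_zero g)
    · exact h5
  rw [Matrix.rank, ← LinearEquiv.finrank_eq (LinearEquiv.ofInjective _ hinj)]
  exact Module.finrank_pi _


/-- for `g ≥ 3` and independent indeterminates `α_{k,i}` over `ℂ`,
the matrix `Z` has rank `2g−3`; in particular the minor on the columns
`(1,2),…,(1,g),(2,3),…,(2,g)` is a nonzero polynomial. -/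
theorem rank_Z (g : ℕ) (hg : 3 ≤ g) :
    (Zmat g).rank = 2 * g - 3 ∧ (Nmat g).det ≠ 0 := by
  refine ⟨?_, det_Nmat_ne_zero g⟩
  have hcard : Fintype.card (Fin (g-1) ⊕ Fin (g-2)) = 2 * g - 3 := by
    simp [Fintype.card_sum]; omega
  refine le_antisymm (hcard ▸ (Zmat g).rank_le_card_height) ?_
  have h1 : (Nmat g).rank ≤ (Zmat g).rank := (ZS g) ▸ Matrix.rank_mul_le_left _ _
  calc 2 * g - 3 = (Nmat g).rank := by rw [rank_Nmat g, hcard]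
    _ ≤ (Zmat g).rank := h1
end

section
/- Let α_1,…,α_g be distinct elements of a field, A(t) = ∏_i (t − α_i), and let (s_{ij})_{i<j} be scalars. Set P(t) = Σ_{i<j} s_{ij} · A(t)/((t−α_i)(t−α_j)) and Q_n = Σ_{i<j} (Σ_{m=0}^{g−2−n} α_i^m α_j^{g−2−n−m}) s_{ij} for n = 0,…,g−2. Writing P(t) = Σ_{n=0}^{g−2} P_n t^n and c_m for the coefficient of t^{g−m} in A(t), one has P_n = Σ_{m=0}^{g−2−n} c_m Q_{n+m} for every n = 0,…,g−2. -/
open Polynomial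

open Finset in
lemma aux1 {R : Type*} [CommRing R] (D : Polynomial R) (x : R) (n : ℕ) :
    ∀ N : ℕ, D.coeff n =
      (∑ k ∈ Finset.range N, ((X - C x) * D).coeff (n + 1 + k) * x ^ k) +
        x ^ N * D.coeff (n + N) := by
  intro N
  induction N with
  | zero => simp
  | succ N ih =>
    have h : D.coeff (n + N) = ((X - C x) * D).coeff (n + N + 1) + x * D.coeff (n + N + 1) := by
      rw [sub_mul, coeff_sub, coeff_X_mul, coeff_C_mul]; ring
    rw [ih, Finset.sum_range_succ, h]
    have h1 : n + 1 + N = n + N + 1 := by omega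
    have h2 : n + (N + 1) = n + N + 1 := by omega
    rw [h1, h2]; ring

lemma key {R : Type*} [CommRing R] (g n : ℕ) (hg : 2 ≤ g) (hn : n ≤ g - 2) (x y : R)
    (B : Polynomial R) (hB : B.natDegree ≤ g - 2) :
    B.coeff n = ∑ m ∈ Finset.range (g - 1 - n),
      ((X - C x) * ((X - C y) * B)).coeff (g - m) *
        ∑ m' ∈ Finset.range (g - 1 - (n + m)), x ^ m' * y ^ (g - 2 - (n + m) - m') := by
  set A := (X - C x) * ((X - C y) * B) with hA
  set Cp := (X - C y) * B with hC
  -- step 1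
  have hBtop : B.coeff (n + (g - 1 - n)) = 0 := by
    apply Polynomial.coeff_eq_zero_of_natDegree_lt
    omega
  have hCdeg : Cp.natDegree ≤ g - 1 := by
    calc Cp.natDegree ≤ (X - C y).natDegree + B.natDegree := natDegree_mul_le
    _ ≤ 1 + (g - 2) := by
        have := natDegree_X_sub_C_le y; omega
    _ ≤ g - 1 := by omega
  have step1 := aux1 B y n (g - 1 - n)
  rw [hBtop, mul_zero, add_zero] at step1
  rw [step1]
  -- step 2: rewrite each C coefficient
  have step2 : ∀ l ∈ Finset.range (g - 1 - n),
      Cp.coeff (n + 1 + l) * y ^ l =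
      ∑ k ∈ Finset.range (g - 1 - n - l), A.coeff (n + 2 + l + k) * x ^ k * y ^ l := by
    intro l hl
    rw [Finset.mem_range] at hl
    have hCtop : Cp.coeff (n + 1 + l + (g - 1 - n - l)) = 0 := by
      apply Polynomial.coeff_eq_zero_of_natDegree_lt
      omega
    have := aux1 Cp x (n + 1 + l) (g - 1 - n - l)
    rw [hCtop, mul_zero, add_zero] at this
    rw [this, Finset.sum_mul]
    apply Finset.sum_congr rfl
    intro k _
    have : n + 1 + l + 1 + k = n + 2 + l + k := by omega
    rw [this, hA, hC]
  rw [Finset.sum_congr rfl step2]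
  -- now both sides are double sums; convert via sigma and bijection
  rw [Finset.sum_sigma']
  simp_rw [Finset.mul_sum]
  rw [Finset.sum_sigma']
  apply Finset.sum_nbij' (fun p => ⟨g - 2 - n - p.1 - p.2, p.2⟩)
    (fun p => ⟨g - 2 - n - p.1 - p.2, p.2⟩)
  · rintro ⟨l, k⟩ hp
    simp only [Finset.mem_sigma, Finset.mem_range] at hp ⊢
    omega
  · rintro ⟨m, m'⟩ hp
    simp only [Finset.mem_sigma, Finset.mem_range] at hp ⊢
    omega
  · rintro ⟨l, k⟩ hp
    simp only [Finset.mem_sigma, Finset.mem_range] at hp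
    simp only [Sigma.mk.inj_iff, heq_eq_eq]
    constructor
    · omega
    · trivial
  · rintro ⟨m, m'⟩ hp
    simp only [Finset.mem_sigma, Finset.mem_range] at hp
    simp only [Sigma.mk.inj_iff, heq_eq_eq]
    constructor
    · omega
    · trivial
  · rintro ⟨l, k⟩ hp
    simp only [Finset.mem_sigma, Finset.mem_range] at hp
    have h1 : g - (g - 2 - n - l - k) = n + 2 + l + k := by omega
    have h2 : g - 2 - (n + (g - 2 - n - l - k)) - k = l := by omega
    rw [h1, h2]
    ring



/-- with `A(t) = ∏_i (t−α_i)`, `P(t) = ∑_{i<j} s_{ij} A(t)/((t−α_i)(t−α_j))`,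
`Q_n = ∑_{i<j} (∑_{m=0}^{g−2−n} α_i^m α_j^{g−2−n−m}) s_{ij}`, and `c_m` the coefficient
of `t^{g−m}` in `A(t)`, one has `P_n = ∑_{m=0}^{g−2−n} c_m Q_{n+m}` for `n = 0,…,g−2`.
(Indices `i,j` run over `0,…,g−1`.) -/
theorem P_coeff_in_terms_of_Q {K : Type*} [Field K] (g : ℕ) (hg : 2 ≤ g)
    (α : ℕ → K) (hdist : ∀ i < g, ∀ j < g, α i = α j → i = j) (s : ℕ → ℕ → K) :
    ∀ n ≤ g - 2,
      (∑ i ∈ Finset.range g, ∑ j ∈ Finset.Ico (i + 1) g,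
          Polynomial.C (s i j) *
            ∏ m ∈ Finset.range g \ {i, j}, (Polynomial.X - Polynomial.C (α m))).coeff n =
        ∑ m ∈ Finset.range (g - 1 - n),
          (∏ m' ∈ Finset.range g, (Polynomial.X - Polynomial.C (α m'))).coeff (g - m) *
            ∑ i ∈ Finset.range g, ∑ j ∈ Finset.Ico (i + 1) g,
              (∑ m' ∈ Finset.range (g - 1 - (n + m)),
                  α i ^ m' * α j ^ (g - 2 - (n + m) - m')) * s i j := by
  intro n hn
  simp only [Polynomial.finset_sum_coeff, Polynomial.coeff_C_mul]
  -- restructure the RHS into a sum over i, j of sums over m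
  simp_rw [Finset.mul_sum]
  rw [Finset.sum_comm]
  apply Finset.sum_congr rfl
  intro i hi
  rw [Finset.sum_comm]
  apply Finset.sum_congr rfl
  intro j hj
  rw [Finset.mem_range] at hi
  rw [Finset.mem_Ico] at hj
  have hij : i ≠ j := by omega
  have hsub : ({i, j} : Finset ℕ) ⊆ Finset.range g := by
    intro z hz
    simp only [Finset.mem_insert, Finset.mem_singleton] at hz
    rw [Finset.mem_range]
    rcases hz with h | h <;> omega
  set B := ∏ m ∈ Finset.range g \ {i, j}, (X - C (α m)) with hBdef
  have hfact : (X - C (α i)) * ((X - C (α j)) * B) =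
      ∏ m' ∈ Finset.range g, (X - C (α m')) := by
    rw [← Finset.prod_sdiff hsub, Finset.prod_pair hij, hBdef]
    ring
  have hBdeg : B.natDegree ≤ g - 2 := by
    have h1 : B.natDegree ≤ ∑ m ∈ Finset.range g \ {i, j}, (X - C (α m)).natDegree :=
      Polynomial.natDegree_prod_le _ _
    have h2 : ∑ m ∈ Finset.range g \ {i, j}, (X - C (α m)).natDegree ≤
        ∑ m ∈ Finset.range g \ {i, j}, 1 :=
      Finset.sum_le_sum (fun m _ => natDegree_X_sub_C_le (α m))
    have h3 : ∑ m ∈ Finset.range g \ {i, j}, 1 = (Finset.range g \ {i, j}).card := by simp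
    have h4 : (Finset.range g \ {i, j}).card = g - 2 := by
      rw [Finset.card_sdiff_of_subset hsub, Finset.card_pair hij, Finset.card_range]
    omega
  have hkey := key g n hg hn (α i) (α j) B hBdeg
  rw [hfact] at hkey
  rw [hkey, Finset.mul_sum]
  apply Finset.sum_congr rfl
  intro m _
  ring
end

section
/- Let α_1,…,α_g be distinct elements of a field and suppose scalars (s_{ij})_{i<j} satisfy Σ_{i<j} s_{ij} A(t)/((t−α_i)(t−α_j)) ≡ 0 as a polynomial in t, where A(t) = ∏_i(t−α_i). Then the polynomial R(t) = Σ_{i<j} s_{ij} A(t)^2/((t−α_i)^2(t−α_j)^2), which a priori has degree at most 2g−4, in fact has degree at most 2g−6 (its coefficients of t^{2g−4} and t^{2g−5} vanish). -/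
open Polynomial

/-- let `α_1,…,α_g` be distinct, `A(t) = ∏_i (t−α_i)`, and suppose the
scalars `s_{ij}` satisfy `∑_{i<j} s_{ij} A(t)/((t−α_i)(t−α_j)) ≡ 0`. Then
`R(t) = ∑_{i<j} s_{ij} A(t)²/((t−α_i)²(t−α_j)²)`, a priori of degree at most `2g−4`,
has its coefficients of `t^{2g−4}` and `t^{2g−5}` vanishing, hence degree at most `2g−6`. -/
theorem R_degree_drop {K : Type*} [Field K] (g : ℕ) (hg : 3 ≤ g)
    (α : ℕ → K) (hdist : ∀ i < g, ∀ j < g, α i = α j → i = j) (s : ℕ → ℕ → K)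
    (hP : (∑ i ∈ Finset.range g, ∑ j ∈ Finset.Ico (i + 1) g,
        Polynomial.C (s i j) *
          ∏ m ∈ Finset.range g \ {i, j}, (Polynomial.X - Polynomial.C (α m))) = 0) :
    (∑ i ∈ Finset.range g, ∑ j ∈ Finset.Ico (i + 1) g,
        Polynomial.C (s i j) *
          (∏ m ∈ Finset.range g \ {i, j},
            (Polynomial.X - Polynomial.C (α m))) ^ 2).coeff (2 * g - 4) = 0 ∧
    (∑ i ∈ Finset.range g, ∑ j ∈ Finset.Ico (i + 1) g,
        Polynomial.C (s i j) *
          (∏ m ∈ Finset.range g \ {i, j},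
            (Polynomial.X - Polynomial.C (α m))) ^ 2).coeff (2 * g - 5) = 0 ∧
    (∑ i ∈ Finset.range g, ∑ j ∈ Finset.Ico (i + 1) g,
        Polynomial.C (s i j) *
          (∏ m ∈ Finset.range g \ {i, j},
            (Polynomial.X - Polynomial.C (α m))) ^ 2).natDegree ≤ 2 * g - 6 := by
  set P : ℕ → ℕ → K[X] := fun i j => ∏ m ∈ Finset.range g \ {i, j}, (X - C (α m)) with hPdef
  have hmon : ∀ i j, (P i j).Monic := fun i j =>
    monic_prod_of_monic _ _ (fun m _ => monic_X_sub_C _)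
  have hdeg : ∀ i ∈ Finset.range g, ∀ j ∈ Finset.Ico (i + 1) g,
      (P i j).natDegree = g - 2 := by
    intro i hi j hj
    simp only [Finset.mem_range, Finset.mem_Ico] at hi hj
    rw [hPdef]
    rw [natDegree_prod _ _ (fun m _ => X_sub_C_ne_zero _)]
    simp only [natDegree_X_sub_C, Finset.sum_const, smul_eq_mul, mul_one]
    rw [Finset.card_sdiff_of_subset (by
      intro m hm
      simp only [Finset.mem_insert, Finset.mem_singleton] at hm
      rcases hm with rfl | rfl <;> simp [Finset.mem_range] <;> omega)]
    rw [Finset.card_insert_of_notMem (by simp; omega), Finset.card_singleton,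
      Finset.card_range]
  -- coefficient at g-2 of the hypothesis sum
  have e1 : (∑ i ∈ Finset.range g, ∑ j ∈ Finset.Ico (i + 1) g, C (s i j) * P i j).coeff (g - 2)
      = ∑ i ∈ Finset.range g, ∑ j ∈ Finset.Ico (i + 1) g, s i j := by
    rw [finset_sum_coeff]
    refine Finset.sum_congr rfl fun i hi => ?_
    rw [finset_sum_coeff]
    refine Finset.sum_congr rfl fun j hj => ?_
    rw [coeff_C_mul]
    have : (P i j).coeff (g - 2) = 1 := by
      rw [← hdeg i hi j hj]; exact (hmon i j).coeff_natDegree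
    rw [this, mul_one]
  have e2 : (∑ i ∈ Finset.range g, ∑ j ∈ Finset.Ico (i + 1) g, C (s i j) * P i j).coeff (g - 3)
      = ∑ i ∈ Finset.range g, ∑ j ∈ Finset.Ico (i + 1) g, s i j * (P i j).nextCoeff := by
    rw [finset_sum_coeff]
    refine Finset.sum_congr rfl fun i hi => ?_
    rw [finset_sum_coeff]
    refine Finset.sum_congr rfl fun j hj => ?_
    rw [coeff_C_mul]
    congr 1
    rw [nextCoeff_of_natDegree_pos (by rw [hdeg i hi j hj]; omega), hdeg i hi j hj]
    congr 1
  have hs1 : ∑ i ∈ Finset.range g, ∑ j ∈ Finset.Ico (i + 1) g, s i j = 0 := by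
    rw [← e1, hP, coeff_zero]
  have hs2 : ∑ i ∈ Finset.range g, ∑ j ∈ Finset.Ico (i + 1) g,
      s i j * (P i j).nextCoeff = 0 := by
    rw [← e2, hP, coeff_zero]
  -- facts about squares
  have hdegsq : ∀ i ∈ Finset.range g, ∀ j ∈ Finset.Ico (i + 1) g,
      ((P i j) ^ 2).natDegree = 2 * g - 4 := by
    intro i hi j hj
    rw [natDegree_pow, hdeg i hi j hj]
    omega
  have c1 : (∑ i ∈ Finset.range g, ∑ j ∈ Finset.Ico (i + 1) g,
      C (s i j) * (P i j) ^ 2).coeff (2 * g - 4) = 0 := by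
    rw [finset_sum_coeff]
    rw [show (0 : K) = ∑ i ∈ Finset.range g, ∑ j ∈ Finset.Ico (i + 1) g, s i j from hs1.symm]
    refine Finset.sum_congr rfl fun i hi => ?_
    rw [finset_sum_coeff]
    refine Finset.sum_congr rfl fun j hj => ?_
    rw [coeff_C_mul]
    have : ((P i j) ^ 2).coeff (2 * g - 4) = 1 := by
      rw [← hdegsq i hi j hj]; exact ((hmon i j).pow 2).coeff_natDegree
    rw [this, mul_one]
  have c2 : (∑ i ∈ Finset.range g, ∑ j ∈ Finset.Ico (i + 1) g,
      C (s i j) * (P i j) ^ 2).coeff (2 * g - 5) = 0 := by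
    have : ∀ i ∈ Finset.range g, ∀ j ∈ Finset.Ico (i + 1) g,
        ((P i j) ^ 2).coeff (2 * g - 5) = 2 * (P i j).nextCoeff := by
      intro i hi j hj
      have h5 : 2 * g - 5 = ((P i j) ^ 2).natDegree - 1 := by
        rw [hdegsq i hi j hj]; omega
      rw [h5, ← nextCoeff_of_natDegree_pos (by rw [hdegsq i hi j hj]; omega)]
      rw [pow_two, (hmon i j).nextCoeff_mul (hmon i j)]
      ring
    rw [finset_sum_coeff]
    have step : ∀ i ∈ Finset.range g,
        (∑ j ∈ Finset.Ico (i + 1) g, C (s i j) * (P i j) ^ 2).coeff (2 * g - 5)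
        = ∑ j ∈ Finset.Ico (i + 1) g, 2 * (s i j * (P i j).nextCoeff) := by
      intro i hi
      rw [finset_sum_coeff]
      refine Finset.sum_congr rfl fun j hj => ?_
      rw [coeff_C_mul, this i hi j hj]
      ring
    rw [Finset.sum_congr rfl step]
    simp only [← Finset.mul_sum]
    rw [hs2, mul_zero]
  refine ⟨c1, c2, ?_⟩
  rw [natDegree_le_iff_coeff_eq_zero]
  intro m hm
  have hb : (∑ i ∈ Finset.range g, ∑ j ∈ Finset.Ico (i + 1) g,
      C (s i j) * (P i j) ^ 2).natDegree ≤ 2 * g - 4 := by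
    refine natDegree_sum_le_of_forall_le _ _ fun i hi => ?_
    refine natDegree_sum_le_of_forall_le _ _ fun j hj => ?_
    exact le_trans (natDegree_C_mul_le _ _) (le_of_eq (hdegsq i hi j hj))
  rcases show m = 2 * g - 5 ∨ m = 2 * g - 4 ∨ 2 * g - 4 < m by omega with rfl | rfl | h
  · exact c2
  · exact c1
  · exact coeff_eq_zero_of_natDegree_lt (lt_of_le_of_lt hb h)
end

section
/- With A(t) = ∏_i (t − α_i) and scalars s_{ij} satisfying Σ_{i<j} s_{ij} A(t)/((t−α_i)(t−α_j)) ≡ 0, the coefficient of t^{2g−6} in R(t) = Σ_{i<j} s_{ij} A(t)^2/((t−α_i)^2(t−α_j)^2) equals −Σ_{i<j} (α_i² + α_j²) s_{ij}. -/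
/-!
Reversal turns `B_S = ∏_{m ∈ S} (X - α_m)`, of degree `n = #S`, into `q_S = ∏_{m ∈ S} (1 - α_m X)`,
so the coefficient of `X^(2n-2)` in `B_S²` is the coefficient of `X²` in `q_S²`, namely
`2 e₂(S) + e₁(S)² = 4 e₂(S) + p₂(S)` by Newton's identity, where `p₂(S) = ∑_{m ∈ S} α_m²`.
Reversing the hypothesis gives `∑ s_ij q_ij = 0`, whose coefficients of `1` and `X²` say
`∑ s_ij = 0` and `∑ s_ij e₂(S_ij) = 0`. With `S_ij = {0, …, g-1} \ {i, j}` what is left is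
`∑ s_ij p₂(S_ij) = ∑ s_ij (∑_m α_m² - α_i² - α_j²) = -∑ s_ij (α_i² + α_j²)`.
-/

open Polynomial Finset

namespace Polynomial

variable {R : Type*} [CommRing R]

theorem coeff_two_sq (p : R[X]) :
    (p ^ 2).coeff 2 = 2 * p.coeff 0 * p.coeff 2 + p.coeff 1 ^ 2 := by
  rw [sq, coeff_mul, Nat.sum_antidiagonal_eq_sum_range_succ_mk]
  simp only [sum_range_succ, sum_range_zero]
  ring

theorem coeff_one_sub_C_mul_X_mul_succ (a : R) (p : R[X]) (k : ℕ) :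
    ((1 - C a * X) * p).coeff (k + 1) = p.coeff (k + 1) - a * p.coeff k := by
  rw [sub_mul, one_mul, mul_assoc, coeff_sub, coeff_C_mul, coeff_X_mul]

theorem reflect_one_X_sub_C (a : R) : reflect 1 (X - C a) = 1 - C a * X := by
  rw [reflect_sub, reflect_one_X, reflect_C, pow_one]

section ProdOneSubCMulX

variable {ι : Type*} (f : ι → R) (s : Finset ι)

theorem natDegree_prod_X_sub_C_le : (∏ i ∈ s, (X - C (f i))).natDegree ≤ #s :=
  (natDegree_prod_le _ _).trans <| (sum_le_sum fun i _ => natDegree_X_sub_C_le (f i)).trans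
    (by simp)

theorem reflect_prod_X_sub_C :
    reflect #s (∏ i ∈ s, (X - C (f i))) = ∏ i ∈ s, (1 - C (f i) * X) := by
  classical
  induction s using Finset.induction with
  | empty => simp
  | insert a s ha ih =>
    rw [prod_insert ha, prod_insert ha, card_insert_of_notMem ha, add_comm,
      reflect_mul _ _ (natDegree_X_sub_C_le _) (natDegree_prod_X_sub_C_le f s),
      reflect_one_X_sub_C, ih]

theorem coeff_zero_prod_one_sub_C_mul_X : (∏ i ∈ s, (1 - C (f i) * X)).coeff 0 = 1 := by
  simp [coeff_zero_eq_eval_zero, eval_prod]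

theorem coeff_one_sq_sub_two_mul_coeff_two_prod_one_sub_C_mul_X :
    (∏ i ∈ s, (1 - C (f i) * X)).coeff 1 ^ 2 - 2 * (∏ i ∈ s, (1 - C (f i) * X)).coeff 2 =
      ∑ i ∈ s, f i ^ 2 := by
  classical
  induction s using Finset.induction with
  | empty => simp [coeff_one]
  | insert a s ha ih =>
    rw [prod_insert ha, coeff_one_sub_C_mul_X_mul_succ, coeff_one_sub_C_mul_X_mul_succ,
      coeff_zero_prod_one_sub_C_mul_X, sum_insert ha, ← ih]
    ring

end ProdOneSubCMulX

theorem coeff_sq_eq_coeff_reflect_sq {p : R[X]} {n k : ℕ} (hp : p.natDegree ≤ n) (hk : k ≤ 2 * n) :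
    (p ^ 2).coeff (2 * n - k) = (reflect n p ^ 2).coeff k := by
  rw [sq, sq, ← reflect_mul _ _ hp hp, coeff_reflect, revAt_le (by omega), two_mul]

end Polynomial

section WeightedSums

variable {R ι κ : Type*} [CommRing R] (f : ι → R) {T : Finset κ} (S : κ → Finset ι) (w : κ → R)
  {n : ℕ} (hS : ∀ t ∈ T, #(S t) = n)
  (h : ∑ t ∈ T, C (w t) * ∏ i ∈ S t, (X - C (f i)) = 0)
include hS h

theorem sum_mul_coeff_prod_one_sub_C_mul_X_eq_zero (k : ℕ) :
    ∑ t ∈ T, w t * (∏ i ∈ S t, (1 - C (f i) * X)).coeff k = 0 := by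
  have := congrArg (coeff · (revAt n k)) h
  simp only [finsetSum_coeff, coeff_C_mul, coeff_zero] at this
  rw [← this]
  refine sum_congr rfl fun t ht => ?_
  rw [← reflect_prod_X_sub_C, hS t ht, coeff_reflect]

theorem sum_eq_zero_of_sum_C_mul_prod_X_sub_C_eq_zero : ∑ t ∈ T, w t = 0 := by
  simpa [coeff_zero_prod_one_sub_C_mul_X] using
    sum_mul_coeff_prod_one_sub_C_mul_X_eq_zero f S w hS h 0

theorem coeff_sum_C_mul_sq_prod_X_sub_C (hn : 1 ≤ n) :
    (∑ t ∈ T, C (w t) * (∏ i ∈ S t, (X - C (f i))) ^ 2).coeff (2 * n - 2) =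
      ∑ t ∈ T, w t * ∑ i ∈ S t, f i ^ 2 := by
  have hsq : ∀ t ∈ T, ((∏ i ∈ S t, (X - C (f i))) ^ 2).coeff (2 * n - 2) =
      4 * (∏ i ∈ S t, (1 - C (f i) * X)).coeff 2 + ∑ i ∈ S t, f i ^ 2 := fun t ht => by
    rw [coeff_sq_eq_coeff_reflect_sq (hS t ht ▸ natDegree_prod_X_sub_C_le f (S t)) (by omega),
      ← hS t ht, reflect_prod_X_sub_C, coeff_two_sq, coeff_zero_prod_one_sub_C_mul_X,
      ← coeff_one_sq_sub_two_mul_coeff_two_prod_one_sub_C_mul_X]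
    ring
  have hq2 := sum_mul_coeff_prod_one_sub_C_mul_X_eq_zero f S w hS h 2
  rw [finsetSum_coeff, sum_congr rfl fun t ht => by rw [coeff_C_mul, hsq t ht]]
  simp only [mul_add, sum_add_distrib, mul_left_comm _ (4 : R), ← mul_sum, hq2, mul_zero, zero_add]

end WeightedSums

theorem R_coeff_top_general {K : Type*} [Field K] (g : ℕ) (hg : 3 ≤ g)
    (α : ℕ → K) (s : ℕ → ℕ → K)
    (hP : (∑ i ∈ Finset.range g, ∑ j ∈ Finset.Ico (i + 1) g,
        Polynomial.C (s i j) *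
          ∏ m ∈ Finset.range g \ {i, j}, (Polynomial.X - Polynomial.C (α m))) = 0) :
    (∑ i ∈ Finset.range g, ∑ j ∈ Finset.Ico (i + 1) g,
        Polynomial.C (s i j) *
          (∏ m ∈ Finset.range g \ {i, j},
            (Polynomial.X - Polynomial.C (α m))) ^ 2).coeff (2 * g - 6) =
      -∑ i ∈ Finset.range g, ∑ j ∈ Finset.Ico (i + 1) g,
          (α i ^ 2 + α j ^ 2) * s i j := by
  simp only [sum_sigma'] at hP ⊢
  set T := (range g).sigma fun i => Ico (i + 1) g
  have hpair : ∀ x ∈ T, x.1 ≠ x.2 ∧ {x.1, x.2} ⊆ range g := by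
    simp only [T, mem_sigma, mem_range, mem_Ico, insert_subset_iff, singleton_subset_iff]
    omega
  have hcard : ∀ x ∈ T, #(range g \ {x.1, x.2}) = g - 2 :=
    fun x hx => by rw [card_sdiff_of_subset (hpair x hx).2, card_range, card_pair (hpair x hx).1]
  have hs0 := sum_eq_zero_of_sum_C_mul_prod_X_sub_C_eq_zero α _ _ hcard hP
  rw [show 2 * g - 6 = 2 * (g - 2) - 2 by omega,
    coeff_sum_C_mul_sq_prod_X_sub_C α _ _ hcard hP (by omega)]
  calc _ = ∑ x ∈ T, s x.1 x.2 * ((∑ m ∈ range g, α m ^ 2) - (α x.1 ^ 2 + α x.2 ^ 2)) :=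
        sum_congr rfl fun x hx => by
          rw [sum_sdiff_eq_sub (hpair x hx).2, sum_pair (hpair x hx).1]
    _ = (∑ m ∈ range g, α m ^ 2) * ∑ x ∈ T, s x.1 x.2 -
          ∑ x ∈ T, (α x.1 ^ 2 + α x.2 ^ 2) * s x.1 x.2 := by
      rw [mul_sum, ← sum_sub_distrib]
      exact sum_congr rfl fun x _ => by ring
    _ = _ := by rw [hs0, mul_zero, zero_sub]

/-- with `A(t) = ∏_i (t−α_i)` (the `α_i` distinct) and scalars `s_{ij}`
satisfying `∑_{i<j} s_{ij} A(t)/((t−α_i)(t−α_j)) ≡ 0`, the coefficient of `t^{2g−6}` in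
`R(t) = ∑_{i<j} s_{ij} A(t)²/((t−α_i)²(t−α_j)²)` equals `−∑_{i<j} (α_i² + α_j²) s_{ij}`. -/
theorem R_coeff_top {K : Type*} [Field K] (g : ℕ) (hg : 3 ≤ g)
    (α : ℕ → K) (hdist : ∀ i < g, ∀ j < g, α i = α j → i = j) (s : ℕ → ℕ → K)
    (hP : (∑ i ∈ Finset.range g, ∑ j ∈ Finset.Ico (i + 1) g,
        Polynomial.C (s i j) *
          ∏ m ∈ Finset.range g \ {i, j}, (Polynomial.X - Polynomial.C (α m))) = 0) :
    (∑ i ∈ Finset.range g, ∑ j ∈ Finset.Ico (i + 1) g,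
        Polynomial.C (s i j) *
          (∏ m ∈ Finset.range g \ {i, j},
            (Polynomial.X - Polynomial.C (α m))) ^ 2).coeff (2 * g - 6) =
      -∑ i ∈ Finset.range g, ∑ j ∈ Finset.Ico (i + 1) g,
          (α i ^ 2 + α j ^ 2) * s i j :=
  R_coeff_top_general g hg α s hP
end
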